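/- Let ℘ be a prime of degree h ≥ 1 in A. Let ᾱ, β̄ ∈ S_h^ω and let u, v be integers with 0 ≤ u ≤ z_ᾱ(h) and 0 ≤ v ≤ z_β̄(h). Then binom(z_{ᾱ⋆β̄}(h), u + q^{h·deg(ᾱ)} v)_C ≡ binom(z_ᾱ(h), u)_C · binom(z_β̄(h), v)_C (mod ℘). -/

import Mathlib

/-!
Over `F_q`, Frobenius gives `D_i = ∏_{k=1}^{i} [k]^{q^{i-k}}` with `[k] = T^{q^k} - T`, so
`n!_C = ∏_{k ≥ 1} [k]^{⌊n/q^k⌋}` and `binom(m+k, m)_C` is the product of the brackets `[j]` such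
that adding `m` and `k` in base `q` carries into digit `j`. If `u + t < Q = q^{hL}`, the carries of
`(u + Qv) + (t + Qw)` are those of `u + t` up to position `hL` and those of `v + w` shifted by `hL`
beyond it. Finally an irreducible `℘` of degree `h` divides `T^{q^{hL}} - T`, hence
`[hL + j] ≡ [j] (mod ℘)`.
-/

open Polynomial

/-- `D_i = ∏_{r=0}^{i-1} (T^{q^i} - T^{q^r})`, with `D_0 = 1`. -/
noncomputable def carlitzD (Fq : Type*) [Field Fq] (q i : ℕ) : Polynomial Fq :=
  ∏ r ∈ Finset.range i, (X ^ q ^ i - X ^ q ^ r)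

/-- The Carlitz factorial `n!_C = ∏_i D_i^{n_i}`, where `n = Σ n_i q^i` is the
`q`-adic expansion of `n` (the digit `n_i` is `n / q^i % q`). -/
noncomputable def carlitzFactorial (Fq : Type*) [Field Fq] (q n : ℕ) : Polynomial Fq :=
  ∏ i ∈ Finset.range (n + 1), carlitzD Fq q i ^ (n / q ^ i % q)

/-- The Carlitz binomial coefficient `binom(n,m)_C = n!_C / (m!_C (n-m)!_C)` for `m ≤ n`,
and `0` otherwise. -/
noncomputable def carlitzBinom (Fq : Type*) [Field Fq] (q n m : ℕ) : Polynomial Fq :=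
  if m ≤ n then
    carlitzFactorial Fq q n / (carlitzFactorial Fq q m * carlitzFactorial Fq q (n - m))
  else 0

noncomputable def carlitzBracket (Fq : Type*) [Field Fq] (q j : ℕ) : Polynomial Fq :=
  X ^ q ^ j - X

/-- The carry into the `q`-adic digit of index `j` when adding `m` and `k`
(it is `0` or `1`). -/
def carry (q m k j : ℕ) : ℕ := (m + k) / q ^ j - m / q ^ j - k / q ^ j

theorem sum_range_pow_mul_div_pow_mod (n q j d : ℕ) :
    ∑ i ∈ Finset.range d, q ^ i * (n / q ^ (j + i) % q) = n / q ^ j % q ^ d := by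
  induction d with
  | zero => simp [Nat.mod_one]
  | succ d ih =>
    rw [Finset.sum_range_succ, ih, Nat.mod_pow_succ, Nat.div_div_eq_div_mul, ← pow_add]

theorem div_add_div_add_carry (q m k j : ℕ) :
    (m + k) / q ^ j = m / q ^ j + k / q ^ j + carry q m k j := by
  have : m / q ^ j + k / q ^ j ≤ (m + k) / q ^ j := Nat.div_add_div_le_add_div
  unfold carry
  omega

theorem carry_add_mul_of_dvd {q Q j : ℕ} (hq : 0 < q) (hj : q ^ j ∣ Q) (u t v w : ℕ) :
    carry q (u + Q * v) (t + Q * w) j = carry q u t j := by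
  obtain ⟨R, rfl⟩ := hj
  have hdiv : ∀ a b, (a + q ^ j * R * b) / q ^ j = a / q ^ j + R * b := fun a b => by
    rw [mul_assoc, Nat.add_mul_div_left _ _ (pow_pos hq j)]
  unfold carry
  rw [show u + q ^ j * R * v + (t + q ^ j * R * w) = u + t + q ^ j * R * (v + w) by ring,
    hdiv, hdiv, hdiv, mul_add]
  omega

theorem carry_add_mul_pow_add {q N u t : ℕ} (hut : u + t < q ^ N) (v w i : ℕ) :
    carry q (u + q ^ N * v) (t + q ^ N * w) (N + i) = carry q v w i := by
  have hdiv : ∀ a b, a < q ^ N → (a + q ^ N * b) / q ^ (N + i) = b / q ^ i := fun a b ha => by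
    rw [pow_add, ← Nat.div_div_eq_div_mul, Nat.add_mul_div_left _ _ (by omega),
      Nat.div_eq_of_lt ha, zero_add]
  unfold carry
  rw [show u + q ^ N * v + (t + q ^ N * w) = u + t + q ^ N * (v + w) by ring,
    hdiv _ _ hut, hdiv _ _ (by omega), hdiv _ _ (by omega)]

theorem sum_Ico_pow_mul_div_pow_mod {n q k N : ℕ} (hq : 0 < q) (hk : k ≤ N) (hN : n < q ^ N) :
    ∑ i ∈ Finset.Ico k N, q ^ (i - k) * (n / q ^ i % q) = n / q ^ k := by
  simp only [Finset.sum_Ico_eq_sum_range, Nat.add_sub_cancel_left]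
  rw [sum_range_pow_mul_div_pow_mod, Nat.mod_eq_of_lt]
  rwa [Nat.div_lt_iff_lt_mul (by positivity), ← pow_add, Nat.sub_add_cancel hk]

section Factorial

variable {Fq : Type*} [Field Fq]

theorem carlitzFactorial_eq_prod_range {q : ℕ} (hq : 1 < q) {n N : ℕ} (hN : n < q ^ N) :
    carlitzFactorial Fq q n = ∏ i ∈ Finset.range N, carlitzD Fq q i ^ (n / q ^ i % q) := by
  have hdigit : ∀ M, n < q ^ M → ∀ i ≥ M, carlitzD Fq q i ^ (n / q ^ i % q) = 1 :=
    fun M hM i hi => by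
      rw [Nat.div_eq_of_lt (hM.trans_le (Nat.pow_le_pow_right (by omega) hi)), Nat.zero_mod,
        pow_zero]
  have hn : n < q ^ n := Nat.lt_pow_self hq
  rw [carlitzFactorial, Finset.eventually_constant_prod (hdigit n hn) n.le_succ,
    ← Finset.eventually_constant_prod (hdigit n hn) (le_max_left n N),
    Finset.eventually_constant_prod (hdigit N hN) (le_max_right n N)]

variable [Fintype Fq]

theorem carlitzBracket_pow_card_pow (j r : ℕ) :
    carlitzBracket Fq (Fintype.card Fq) j ^ Fintype.card Fq ^ r
      = X ^ Fintype.card Fq ^ (j + r) - X ^ Fintype.card Fq ^ r := by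
  induction r with
  | zero => simp [carlitzBracket]
  | succ r ih =>
    rw [pow_succ, pow_mul, ih, ← FiniteField.expand_card, map_sub, map_pow, map_pow, expand_X,
      ← pow_mul, ← pow_mul]
    ring

theorem carlitzBracket_add_sub (j k : ℕ) :
    carlitzBracket Fq (Fintype.card Fq) (j + k) - carlitzBracket Fq (Fintype.card Fq) k
      = carlitzBracket Fq (Fintype.card Fq) j ^ Fintype.card Fq ^ k := by
  rw [carlitzBracket_pow_card_pow, carlitzBracket, carlitzBracket]
  ring

theorem carlitzBracket_ne_zero {j : ℕ} (hj : j ≠ 0) :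
    carlitzBracket Fq (Fintype.card Fq) j ≠ 0 :=
  FiniteField.X_pow_card_pow_sub_X_ne_zero Fq hj Fintype.one_lt_card

theorem carlitzD_eq_prod (i : ℕ) :
    carlitzD Fq (Fintype.card Fq) i
      = ∏ k ∈ Finset.range i, carlitzBracket Fq (Fintype.card Fq) (k + 1) ^
          Fintype.card Fq ^ (i - (k + 1)) := by
  rw [carlitzD, ← Finset.prod_range_reflect]
  refine Finset.prod_congr rfl fun r hr => ?_
  rw [Finset.mem_range] at hr
  rw [carlitzBracket_pow_card_pow, show r + 1 + (i - (r + 1)) = i by omega,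
    show i - 1 - r = i - (r + 1) by omega]

theorem carlitzFactorial_eq_prod {n N : ℕ} (hN : n < Fintype.card Fq ^ N) :
    carlitzFactorial Fq (Fintype.card Fq) n
      = ∏ j ∈ Finset.range N, carlitzBracket Fq (Fintype.card Fq) (j + 1) ^
          (n / Fintype.card Fq ^ (j + 1)) := by
  rw [carlitzFactorial_eq_prod_range Fintype.one_lt_card hN]
  simp only [carlitzD_eq_prod, ← Finset.prod_pow, ← pow_mul]
  rw [Finset.prod_comm' (t' := Finset.range N) (s' := fun k => Finset.Ico (k + 1) N)
    (fun i k => by simp only [Finset.mem_range, Finset.mem_Ico]; omega)]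
  refine Finset.prod_congr rfl fun k hk => ?_
  rw [Finset.prod_pow_eq_pow_sum,
    sum_Ico_pow_mul_div_pow_mod Fintype.card_pos (Finset.mem_range.mp hk) hN]

theorem carlitzFactorial_ne_zero (n : ℕ) : carlitzFactorial Fq (Fintype.card Fq) n ≠ 0 := by
  rw [carlitzFactorial_eq_prod (Nat.lt_pow_self Fintype.one_lt_card)]
  exact Finset.prod_ne_zero_iff.mpr fun j _ =>
    pow_ne_zero _ (carlitzBracket_ne_zero j.succ_ne_zero)

theorem carlitzBinom_add_eq_prod {m k N : ℕ} (hN : m + k < Fintype.card Fq ^ N) :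
    carlitzBinom Fq (Fintype.card Fq) (m + k) m
      = ∏ j ∈ Finset.range N, carlitzBracket Fq (Fintype.card Fq) (j + 1) ^
          carry (Fintype.card Fq) m k (j + 1) := by
  have hfact : carlitzFactorial Fq (Fintype.card Fq) (m + k)
      = carlitzFactorial Fq (Fintype.card Fq) m * carlitzFactorial Fq (Fintype.card Fq) k *
        ∏ j ∈ Finset.range N, carlitzBracket Fq (Fintype.card Fq) (j + 1) ^
          carry (Fintype.card Fq) m k (j + 1) := by
    rw [carlitzFactorial_eq_prod hN, carlitzFactorial_eq_prod (N := N) (by omega),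
      carlitzFactorial_eq_prod (N := N) (by omega), ← Finset.prod_mul_distrib,
      ← Finset.prod_mul_distrib]
    simp only [← pow_add, div_add_div_add_carry]
  rw [carlitzBinom, if_pos (Nat.le_add_right m k), Nat.add_sub_cancel_left, hfact,
    mul_div_cancel_left₀ _
      (mul_ne_zero (carlitzFactorial_ne_zero m) (carlitzFactorial_ne_zero k))]

end Factorial

section Congruence

variable {Fq : Type*} [Field Fq] [Fintype Fq] {℘ : Polynomial Fq}

theorem mk_carlitzBracket_natDegree_mul_add (h℘ : Irreducible ℘) (L k : ℕ) :
    AdjoinRoot.mk ℘ (carlitzBracket Fq (Fintype.card Fq) (℘.natDegree * L + k))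
      = AdjoinRoot.mk ℘ (carlitzBracket Fq (Fintype.card Fq) k) := by
  have h℘L : ℘ ∣ carlitzBracket Fq (Fintype.card Fq) (℘.natDegree * L) := by
    rw [carlitzBracket, ← Nat.card_eq_fintype_card,
      ← h℘.natDegree_dvd_iff_dvd_X_pow_card_pow_sub_X]
    exact dvd_mul_right _ _
  rw [AdjoinRoot.mk_eq_mk, carlitzBracket_add_sub]
  exact dvd_pow h℘L (pow_ne_zero _ Fintype.card_ne_zero)

theorem carlitzBinom_add_mul_congr (h℘ : Irreducible ℘) (L : ℕ) {x y u v : ℕ}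
    (hx : x < Fintype.card Fq ^ (℘.natDegree * L)) (hu : u ≤ x) (hv : v ≤ y) :
    ℘ ∣ carlitzBinom Fq (Fintype.card Fq) (x + Fintype.card Fq ^ (℘.natDegree * L) * y)
          (u + Fintype.card Fq ^ (℘.natDegree * L) * v) -
        carlitzBinom Fq (Fintype.card Fq) x u * carlitzBinom Fq (Fintype.card Fq) y v := by
  obtain ⟨t, rfl⟩ := Nat.exists_eq_add_of_le hu
  obtain ⟨w, rfl⟩ := Nat.exists_eq_add_of_le hv
  have hvw : v + w < Fintype.card Fq ^ (v + w) := Nat.lt_pow_self Fintype.one_lt_card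
  have hsum : ∀ Q, u + t + Q * (v + w) = u + Q * v + (t + Q * w) := fun Q => by ring
  have hbound : u + Fintype.card Fq ^ (℘.natDegree * L) * v +
      (t + Fintype.card Fq ^ (℘.natDegree * L) * w)
      < Fintype.card Fq ^ (℘.natDegree * L + (v + w)) := by
    rw [← hsum, pow_add]
    nlinarith
  rw [hsum, carlitzBinom_add_eq_prod hbound, carlitzBinom_add_eq_prod hx,
    carlitzBinom_add_eq_prod hvw, Finset.prod_range_add, ← AdjoinRoot.mk_eq_mk, map_mul,
    map_mul]
  congr 1
  · refine congrArg _ (Finset.prod_congr rfl fun j hj => ?_)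
    rw [carry_add_mul_of_dvd Fintype.card_pos
      (pow_dvd_pow _ (Finset.mem_range.mp hj))]
  · simp only [map_prod, map_pow, add_assoc, carry_add_mul_pow_add hx,
      mk_carlitzBracket_natDegree_mul_add h℘]

end Congruence

/-- A word of `S_h^ω` is a list of digits `< q^h`, `z_ᾱ(h) = Nat.ofDigits (q^h) ᾱ`,
`deg ᾱ = ᾱ.length`, and concatenation is list append. -/
theorem carlitzBinom_concat_mul_congr_general (Fq : Type*) [Field Fq] [Fintype Fq]
    (p s : ℕ) (hcard : Fintype.card Fq = p ^ s)
    (h : ℕ) (hh : 1 ≤ h) (℘ : Polynomial Fq) (hirr : Irreducible ℘) (hdeg : ℘.natDegree = h)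
    (a b : List ℕ) (ha' : ∀ x ∈ a, x < (p ^ s) ^ h)
    (u v : ℕ) (hu : u ≤ Nat.ofDigits ((p ^ s) ^ h) a) (hv : v ≤ Nat.ofDigits ((p ^ s) ^ h) b) :
    ℘ ∣ (carlitzBinom Fq (p ^ s) (Nat.ofDigits ((p ^ s) ^ h) (a ++ b))
          (u + ((p ^ s) ^ h) ^ a.length * v) -
      carlitzBinom Fq (p ^ s) (Nat.ofDigits ((p ^ s) ^ h) a) u *
        carlitzBinom Fq (p ^ s) (Nat.ofDigits ((p ^ s) ^ h) b) v) := by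
  subst hdeg
  rw [← hcard] at ha' hu hv ⊢
  rw [Nat.ofDigits_append, ← pow_mul]
  refine carlitzBinom_add_mul_congr hirr a.length ?_ hu hv
  rw [pow_mul]
  exact Nat.ofDigits_lt_base_pow_length (Nat.one_lt_pow (by omega) Fintype.one_lt_card) ha'

/-- Corollary 1: for a prime `℘` of degree `h ≥ 1` in `A`, words `ᾱ, β̄ ∈ S_h^ω`
(nonempty lists of digits `< q^h`, with `z_ᾱ(h) = Nat.ofDigits (q^h) ᾱ`,
`deg ᾱ = ᾱ.length`, concatenation being list append), and integers
`0 ≤ u ≤ z_ᾱ(h)`, `0 ≤ v ≤ z_β̄(h)`: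
`binom(z_{ᾱ⋆β̄}(h), u + q^{h·deg ᾱ} v)_C ≡ binom(z_ᾱ(h), u)_C · binom(z_β̄(h), v)_C (mod ℘)`. -/
theorem carlitzBinom_concat_mul_congr (Fq : Type*) [Field Fq] [Fintype Fq]
    (p s : ℕ) (hp : p.Prime) (hs : 0 < s) (hcard : Fintype.card Fq = p ^ s)
    (h : ℕ) (hh : 1 ≤ h) (℘ : Polynomial Fq) (hirr : Irreducible ℘) (hdeg : ℘.natDegree = h)
    (a b : List ℕ) (ha : a ≠ []) (ha' : ∀ x ∈ a, x < (p ^ s) ^ h)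
    (hb : b ≠ []) (hb' : ∀ x ∈ b, x < (p ^ s) ^ h)
    (u v : ℕ) (hu : u ≤ Nat.ofDigits ((p ^ s) ^ h) a) (hv : v ≤ Nat.ofDigits ((p ^ s) ^ h) b) :
    ℘ ∣ (carlitzBinom Fq (p ^ s) (Nat.ofDigits ((p ^ s) ^ h) (a ++ b))
          (u + ((p ^ s) ^ h) ^ a.length * v) -
      carlitzBinom Fq (p ^ s) (Nat.ofDigits ((p ^ s) ^ h) a) u *
        carlitzBinom Fq (p ^ s) (Nat.ofDigits ((p ^ s) ^ h) b) v) :=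
  carlitzBinom_concat_mul_congr_general Fq p s hcard h hh ℘ hirr hdeg a b ha' u v hu hv
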